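/- arXiv:2501.17850 — 7 statements merged into one kernel-verified Lean document; each statement's English description precedes it below -/
import Mathlib

section
/- Let m and n be integers, let H be the (m,n)-Horadam sequence, and set s = m^2 + mn - n^2. Then for every integer k ≥ 1, H_k^2 + H_k·H_{k-1} - H_{k-1}^2 = (n^2 + mn - m^2) + 2·ε_k·s + 2·∑_{i=1}^{k-1} H_i^2, where ε_k = 1 if k is even and ε_k = 0 if k is odd (and the sum is empty when k = 1). -/
/-- The `(m,n)`-Horadam sequence: `H 0 = m`, `H 1 = n`, `H k = H (k-1) + H (k-2)`. -/
def horadam (m n : ℤ) : ℕ → ℤ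
  | 0 => m
  | 1 => n
  | k + 2 => horadam m n (k + 1) + horadam m n k

lemma horadam_cassini (m n : ℤ) : ∀ k : ℕ,
    horadam m n k * horadam m n (k + 2) - (horadam m n (k + 1)) ^ 2
      = (-1 : ℤ) ^ k * (m ^ 2 + m * n - n ^ 2) := by
  intro k
  induction k with
  | zero => simp [horadam]; ring
  | succ j ih =>
    have h3 : horadam m n (j + 3) = horadam m n (j + 2) + horadam m n (j + 1) := rfl
    have h2 : horadam m n (j + 2) = horadam m n (j + 1) + horadam m n j := rfl
    show horadam m n (j+1) * horadam m n (j+3) - _ = _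
    rw [h3, h2]
    rw [h2] at ih
    linear_combination -ih

theorem horadam_sum_identity (m n : ℤ) (s : ℤ) (hs : s = m ^ 2 + m * n - n ^ 2) :
    ∀ k : ℕ, 1 ≤ k →
      (horadam m n k) ^ 2 + horadam m n k * horadam m n (k - 1)
          - (horadam m n (k - 1)) ^ 2
        = (n ^ 2 + m * n - m ^ 2) + 2 * (if Even k then (1 : ℤ) else 0) * s
            + 2 * ∑ i ∈ Finset.Icc 1 (k - 1), (horadam m n i) ^ 2 := by
  intro k hk
  obtain ⟨j, rfl⟩ := Nat.exists_eq_add_of_le hk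
  clear hk
  induction j with
  | zero => simp [horadam]; ring
  | succ j ih =>
    rw [show 1 + (j + 1) = j + 2 from by omega]
    rw [show j + 2 - 1 = j + 1 from rfl]
    rw [show 1 + j = j + 1 from by omega] at ih
    rw [show j + 1 - 1 = j from rfl] at ih
    rw [Finset.sum_Icc_succ_top (by omega : 1 ≤ j + 1)]
    have hrec : horadam m n (j + 2) = horadam m n (j + 1) + horadam m n j := rfl
    rw [hrec]
    have hcas := horadam_cassini m n j
    rw [hrec] at hcas
    rcases Nat.even_or_odd j with h | h
    · rw [if_pos (by simpa [Nat.even_add] using h : Even (j + 2))]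
      rw [if_neg (by simpa [Nat.even_add_one] using h)] at ih
      rw [h.neg_one_pow] at hcas
      linear_combination ih + 2 * hcas - 2 * hs
    · have hne : ¬ Even j := Nat.not_even_iff_odd.mpr h
      rw [if_neg (by simpa [Nat.even_add] using hne : ¬ Even (j + 2))]
      rw [if_pos (Nat.even_add_one.mpr hne)] at ih
      rw [Odd.neg_one_pow h] at hcas
      linear_combination ih + 2 * hcas + 2 * hs
end

section
/- Let m and n be integers, let H be the (m,n)-Horadam sequence, and set s = m^2 + mn - n^2. Then for every integer k ≥ 1, H_k^2 + H_k·H_{k-1} + H_{k-1}^2 = (n^2 + mn - m^2) + 2·ε_k·s + 2·∑_{i=1}^{k-1} H_i^2 + 2·H_{k-1}^2, where ε_k = 1 if k is even and ε_k = 0 if k is odd (and the sum is empty when k = 1). -/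
lemma horadam_aux (m n : ℤ) : ∀ k : ℕ,
    (horadam m n k) ^ 2 + horadam m n k * horadam m n (k + 1)
      - (horadam m n (k + 1)) ^ 2
      = (if Even k then (1 : ℤ) else -1) * (m ^ 2 + m * n - n ^ 2) := by
  intro k
  induction k with
  | zero => simp [horadam]
  | succ k ih =>
    simp only [show k + 1 + 1 = k + 2 from rfl, horadam]
    by_cases h : Even k
    · rw [if_pos h] at ih
      rw [if_neg (by simp [Nat.even_add_one, h])]
      linear_combination -ih
    · rw [if_neg h] at ih
      rw [if_pos (Nat.even_add_one.2 h)]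
      linear_combination -ih

theorem horadam_sum_identity' (m n : ℤ) (s : ℤ) (hs : s = m ^ 2 + m * n - n ^ 2) :
    ∀ k : ℕ, 1 ≤ k →
      (horadam m n k) ^ 2 + horadam m n k * horadam m n (k - 1)
          + (horadam m n (k - 1)) ^ 2
        = (n ^ 2 + m * n - m ^ 2) + 2 * (if Even k then (1 : ℤ) else 0) * s
            + 2 * ∑ i ∈ Finset.Icc 1 (k - 1), (horadam m n i) ^ 2
            + 2 * (horadam m n (k - 1)) ^ 2 := by
  subst hs
  intro k hk
  induction k, hk using Nat.le_induction with
  | base => simp [horadam]; ring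
  | succ k hk ih =>
    obtain ⟨j, rfl⟩ : ∃ j, k = j + 1 := ⟨k - 1, (Nat.succ_pred_eq_of_pos hk).symm⟩
    have haux := horadam_aux m n j
    simp only [Nat.add_sub_cancel] at ih ⊢
    rw [Finset.sum_Icc_succ_top (by omega : 1 ≤ j + 1)]
    simp only [show j + 1 + 1 = j + 2 from rfl, horadam]
    by_cases h : Even j
    · rw [if_pos (by simp [Nat.even_add_one, h] : Even (j + 2))]
      rw [if_neg (by simp [Nat.even_add_one, h])] at ih
      rw [if_pos h] at haux
      linear_combination ih + 2 * haux
    · rw [if_neg (by simp [Nat.even_add_one, h])]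
      rw [if_pos (Nat.even_add_one.2 h)] at ih
      rw [if_neg h] at haux
      linear_combination ih + 2 * haux
end

section
/- Let m and n be positive integers with m < n, let H be the (m,n)-Horadam sequence, and for k ≥ 1 set s_k = H_k^2 + H_k·H_{k-1} - H_{k-1}^2. Then the sequence (s_k)_{k ≥ 1} is strictly increasing: for every integer k ≥ 1, s_{k+1} > s_k. -/
/-- `s k = H k ^ 2 + H k * H (k-1) - H (k-1) ^ 2`. -/
def sSeq (m n : ℤ) (k : ℕ) : ℤ :=
  (horadam m n k) ^ 2 + horadam m n k * horadam m n (k - 1) - (horadam m n (k - 1)) ^ 2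

lemma horadam_pos (m n : ℤ) (hm : 0 < m) (hn : 0 < n) : ∀ k, 0 < horadam m n k
  | 0 => hm
  | 1 => hn
  | k + 2 => by
      have h1 := horadam_pos m n hm hn (k + 1)
      have h2 := horadam_pos m n hm hn k
      simp only [horadam]; linarith

theorem sSeq_strictMono_of_lt (m n : ℤ) (hm : 0 < m) (hn : 0 < n) (hmn : m < n) :
    ∀ k : ℕ, 1 ≤ k → sSeq m n k < sSeq m n (k + 1) := by
  rintro (_ | j) hk
  · omega
  · have h1 := horadam_pos m n hm hn j
    have h2 := horadam_pos m n hm hn (j + 1)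
    simp only [sSeq, Nat.add_sub_cancel, horadam]
    nlinarith [sq_nonneg (horadam m n j), sq_nonneg (horadam m n (j+1))]
end

section
/- Let m and n be coprime integers with 1 < m < n, and let (q_l, …, q_1, q_0) be the quotient sequence of (m, n). Then the following are equivalent: (i) there exist ε ∈ {1, -1}, an integer a ≥ 2, and an integer j ≥ 1 such that m = G_j and n = G_{j+1}, where G is the (ε, a)-Horadam sequence; (ii) q_i = 1 for all 1 ≤ i ≤ l and q_0 ∈ {1, 2} (that is, (m, n) is a maximal pair). -/
/-- `(l, q, ρ)` records the Euclidean algorithm for the pair `(m, n)` run down to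
remainder `1`: the remainders are `ρ (l+2) = n`, `ρ (l+1) = m`, `ρ l, …, ρ 0 = 1`,
with quotients `q l, …, q 0 ≥ 1` satisfying `ρ (i+2) = q i * ρ (i+1) + ρ i` and
`0 < ρ i < ρ (i+1)` for all `i ≤ l`. -/
def IsQuotSeq (m n : ℤ) (l : ℕ) (q ρ : ℕ → ℤ) : Prop :=
  ρ (l + 2) = n ∧ ρ (l + 1) = m ∧ ρ 0 = 1 ∧
    ∀ i ≤ l, 1 ≤ q i ∧ ρ (i + 2) = q i * ρ (i + 1) + ρ i ∧ 0 < ρ i ∧ ρ i < ρ (i + 1)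

lemma horadam_rec (m n : ℤ) (k : ℕ) :
    horadam m n (k + 2) = horadam m n (k + 1) + horadam m n k := by
  simp [horadam]

lemma qdiv {m n r u : ℤ} (h : n = u * m + r) (h0 : 0 < r) (h1 : r < m) :
    u = n / m ∧ r = n % m := by
  constructor
  · rw [h, add_comm, Int.add_mul_ediv_right _ _ (by omega : m ≠ 0),
      Int.ediv_eq_zero_of_lt h0.le h1, zero_add]
  · rw [h, add_comm, Int.add_mul_emod_self_right, Int.emod_eq_of_lt h0.le h1]

lemma quotseq_grow {m n : ℤ} {l : ℕ} {q ρ : ℕ → ℤ} (h : IsQuotSeq m n l q ρ) :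
    ∀ k, k ≤ l → 1 + (k : ℤ) ≤ ρ k := by
  obtain ⟨-, -, h0, hall⟩ := h
  intro k
  induction k with
  | zero => intro _; simp [h0]
  | succ i ih =>
    intro hk
    have h1 := hall i (by omega)
    have h2 := ih (by omega)
    push_cast
    omega

lemma quotseq_unique : ∀ (l : ℕ) (m n : ℤ) (l' : ℕ) (q ρ q' ρ' : ℕ → ℤ),
    IsQuotSeq m n l q ρ → IsQuotSeq m n l' q' ρ' →
    l = l' ∧ ∀ i ≤ l, q i = q' i := by
  intro l
  induction l with
  | zero =>
    intro m n l' q ρ q' ρ' h h'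
    have hg' := quotseq_grow h'
    obtain ⟨hn, hm, h0, hall⟩ := h
    obtain ⟨hn', hm', h0', hall'⟩ := h'
    have hn2 : ρ 2 = n := hn
    have hm2 : ρ 1 = m := hm
    have H : 1 ≤ q 0 ∧ ρ 2 = q 0 * ρ 1 + ρ 0 ∧ 0 < ρ 0 ∧ ρ 0 < ρ 1 := hall 0 le_rfl
    have H' := hall' l' le_rfl
    have hd := qdiv (m := m) (n := n) (u := q 0) (r := (1 : ℤ))
      (by rw [← hn2, H.2.1, hm2, h0]) one_pos (by rw [← hm2, ← h0]; exact H.2.2.2)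
    have hd' := qdiv (m := m) (n := n) (u := q' l') (r := ρ' l')
      (by rw [← hn', H'.2.1, hm']) H'.2.2.1 (by rw [← hm']; exact H'.2.2.2)
    have hr : ρ' l' = 1 := by rw [hd'.2, ← hd.2]
    rcases Nat.eq_zero_or_pos l' with rfl | hl'
    · refine ⟨rfl, fun i hi => ?_⟩
      have hi0 : i = 0 := Nat.le_zero.mp hi
      subst hi0
      rw [hd.1, hd'.1]
    · exfalso
      have := hg' l' le_rfl
      omega
  | succ k IH =>
    intro m n l' q ρ q' ρ' h h'
    have hg := quotseq_grow h
    obtain ⟨hn, hm, h0, hall⟩ := h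
    obtain ⟨hn', hm', h0', hall'⟩ := h'
    have H := hall (k + 1) le_rfl
    have hd := qdiv (m := m) (n := n) (u := q (k + 1)) (r := ρ (k + 1))
      (by rw [← hn, H.2.1, hm]) H.2.2.1 (by rw [← hm]; exact H.2.2.2)
    have h2 : 2 ≤ ρ (k + 1) := by
      have := hg (k + 1) le_rfl
      push_cast at this
      omega
    rcases l' with _ | k'
    · exfalso
      have hn2' : ρ' 2 = n := hn'
      have hm2' : ρ' 1 = m := hm'
      have H' : 1 ≤ q' 0 ∧ ρ' 2 = q' 0 * ρ' 1 + ρ' 0 ∧ 0 < ρ' 0 ∧ ρ' 0 < ρ' 1 := hall' 0 le_rfl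
      have hd' := qdiv (m := m) (n := n) (u := q' 0) (r := (1 : ℤ))
        (by rw [← hn2', H'.2.1, hm2', h0']) one_pos (by rw [← hm2', ← h0']; exact H'.2.2.2)
      have : ρ (k + 1) = 1 := by rw [hd.2, ← hd'.2]
      omega
    · have H' := hall' (k' + 1) le_rfl
      have hd' := qdiv (m := m) (n := n) (u := q' (k' + 1)) (r := ρ' (k' + 1))
        (by rw [← hn', H'.2.1, hm']) H'.2.2.1 (by rw [← hm']; exact H'.2.2.2)
      have hshift : IsQuotSeq (ρ (k + 1)) m k q ρ :=
        ⟨hm, rfl, h0, fun i hi => hall i (by omega)⟩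
      have hshift' : IsQuotSeq (ρ (k + 1)) m k' q' ρ' := by
        have he : ρ' (k' + 1) = ρ (k + 1) := by rw [hd'.2, ← hd.2]
        exact ⟨hm', he, h0', fun i hi => hall' i (by omega)⟩
      obtain ⟨hl, hq⟩ := IH (ρ (k + 1)) m k' q ρ q' ρ' hshift hshift'
      subst hl
      refine ⟨rfl, fun i hi => ?_⟩
      rcases Nat.lt_or_ge i (k + 1) with hik | hik
      · exact hq i (by omega)
      · have : i = k + 1 := by omega
        subst this
        rw [hd.1, hd'.1]

lemma horadam_grow (e a : ℤ) (i0 : ℕ) (h1 : 1 ≤ horadam e a i0)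
    (h2 : horadam e a i0 < horadam e a (i0 + 1)) :
    ∀ i, i0 ≤ i → 1 ≤ horadam e a i ∧ horadam e a i < horadam e a (i + 1) := by
  intro i hi
  induction i, hi using Nat.le_induction with
  | base => exact ⟨h1, h2⟩
  | succ k hk ih =>
    have hrec := horadam_rec e a k
    show 1 ≤ horadam e a (k + 1) ∧ horadam e a (k + 1) < horadam e a (k + 2)
    omega

theorem horadam_subseq_iff_maximal_pair (m n : ℤ) (hm : 1 < m) (hmn : m < n)
    (hcop : IsCoprime m n) (l : ℕ) (q ρ : ℕ → ℤ) (hqs : IsQuotSeq m n l q ρ) :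
    (∃ ε : ℤ, (ε = 1 ∨ ε = -1) ∧ ∃ a : ℤ, 2 ≤ a ∧ ∃ j : ℕ, 1 ≤ j ∧
        m = horadam ε a j ∧ n = horadam ε a (j + 1)) ↔
      (∀ i : ℕ, 1 ≤ i → i ≤ l → q i = 1) ∧ (q 0 = 1 ∨ q 0 = 2) := by
  constructor
  · rintro ⟨ε, hε, a, ha, j, hj, hmG, hnG⟩
    rcases hε with rfl | rfl
    · -- ε = 1
      have hb0 : horadam 1 a 0 = 1 := rfl
      have hb1 : horadam 1 a 1 = a := rfl
      have hG := horadam_grow 1 a 0 (by rw [hb0]) (by rw [hb0, hb1]; omega)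
      obtain ⟨k, rfl⟩ : ∃ k, j = k + 1 := ⟨j - 1, by omega⟩
      have hqs' : IsQuotSeq m n k (fun _ => 1) (horadam 1 a) := by
        refine ⟨hnG.symm, hmG.symm, hb0, fun i _ => ⟨le_refl 1, ?_, ?_, ?_⟩⟩
        · rw [horadam_rec]; ring
        · have := (hG i (Nat.zero_le _)).1; omega
        · exact (hG i (Nat.zero_le _)).2
      obtain ⟨rfl, hq⟩ := quotseq_unique l m n k q ρ (fun _ => 1) (horadam 1 a) hqs hqs'
      exact ⟨fun i _ h2 => hq i h2, Or.inl (hq 0 (Nat.zero_le _))⟩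
    · -- ε = -1
      have hb0 : horadam (-1) a 0 = -1 := rfl
      have hb1 : horadam (-1) a 1 = a := rfl
      have hb2 : horadam (-1) a 2 = a + -1 := by
        rw [horadam_rec (-1) a 0, hb0, hb1]
      have hb3 : horadam (-1) a 3 = 2 * a + -1 := by
        rw [horadam_rec (-1) a 1, hb2, hb1]; ring
      have hG := horadam_grow (-1) a 2 (by omega) (by rw [show 2 + 1 = 3 from rfl, hb3]; omega)
      have hj2 : 2 ≤ j := by
        rcases j with _ | _ | j
        · omega
        · exfalso; rw [hb1] at hmG; rw [hb2] at hnG; omega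
        · omega
      by_cases ha3 : 3 ≤ a
      · -- a ≥ 3 : quotient sequence is (1,…,1,2)
        obtain ⟨k, rfl⟩ : ∃ k, j = k + 2 := ⟨j - 2, by omega⟩
        have hqs' : IsQuotSeq m n k (fun i => if i = 0 then 2 else 1)
            (fun i => if i = 0 then 1 else horadam (-1) a (i + 1)) := by
          refine ⟨hnG.symm, hmG.symm, rfl, ?_⟩
          intro i hi
          rcases i with _ | i
          · refine ⟨?_, ?_, ?_, ?_⟩
            · show (1 : ℤ) ≤ 2; norm_num
            · show horadam (-1) a 3 = 2 * horadam (-1) a 2 + 1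
              rw [hb3, hb2]; ring
            · show (0 : ℤ) < 1; norm_num
            · show (1 : ℤ) < horadam (-1) a 2
              rw [hb2]; omega
          · refine ⟨le_refl 1, ?_, ?_, ?_⟩
            · show horadam (-1) a (i + 4) = 1 * horadam (-1) a (i + 3) + horadam (-1) a (i + 2)
              rw [one_mul]; exact horadam_rec (-1) a (i + 2)
            · show (0 : ℤ) < horadam (-1) a (i + 2)
              have := (hG (i + 2) (by omega)).1; omega
            · show horadam (-1) a (i + 2) < horadam (-1) a (i + 3)
              exact (hG (i + 2) (by omega)).2
        obtain ⟨rfl, hq⟩ := quotseq_unique l m n k q ρ _ _ hqs hqs'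
        refine ⟨fun i h1 h2 => ?_, Or.inr ?_⟩
        · have hne : ¬ i = 0 := by omega
          simpa [hne] using hq i h2
        · simpa using hq 0 (Nat.zero_le _)
      · -- a = 2 : quotient sequence is all 1's
        have ha2 : a = 2 := by omega
        subst ha2
        have hj3 : 3 ≤ j := by
          rcases Nat.lt_or_ge j 3 with hj' | hj'
          · exfalso
            have : j = 2 := by omega
            subst this
            rw [hb2] at hmG
            omega
          · exact hj'
        obtain ⟨k, rfl⟩ : ∃ k, j = k + 3 := ⟨j - 3, by omega⟩
        have hqs' : IsQuotSeq m n k (fun _ => 1) (fun i => horadam (-1) 2 (i + 2)) := by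
          refine ⟨hnG.symm, hmG.symm, ?_, fun i _ => ⟨le_refl 1, ?_, ?_, ?_⟩⟩
          · show horadam (-1) 2 2 = 1
            rw [hb2]; norm_num
          · show horadam (-1) 2 (i + 4) = 1 * horadam (-1) 2 (i + 3) + horadam (-1) 2 (i + 2)
            rw [one_mul]; exact horadam_rec (-1) 2 (i + 2)
          · show (0 : ℤ) < horadam (-1) 2 (i + 2)
            have := (hG (i + 2) (by omega)).1; omega
          · show horadam (-1) 2 (i + 2) < horadam (-1) 2 (i + 3)
            exact (hG (i + 2) (by omega)).2
        obtain ⟨rfl, hq⟩ := quotseq_unique l m n k q ρ _ _ hqs hqs'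
        exact ⟨fun i _ h2 => hq i h2, Or.inl (hq 0 (Nat.zero_le _))⟩
  · rintro ⟨hq1, hq0⟩
    obtain ⟨hn, hm', h0, hall⟩ := hqs
    have H0 : 1 ≤ q 0 ∧ ρ 2 = q 0 * ρ 1 + ρ 0 ∧ 0 < ρ 0 ∧ ρ 0 < ρ 1 := hall 0 (Nat.zero_le _)
    have ha1 : 2 ≤ ρ 1 := by omega
    rcases hq0 with hq0 | hq0
    · -- q 0 = 1 : take ε = 1, a = ρ 1, j = l + 1
      have key : ∀ k, k ≤ l + 1 →
          ρ k = horadam 1 (ρ 1) k ∧ ρ (k + 1) = horadam 1 (ρ 1) (k + 1) := by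
        intro k hk
        induction k with
        | zero => exact ⟨by rw [h0]; rfl, rfl⟩
        | succ i ih =>
          obtain ⟨e1, e2⟩ := ih (by omega)
          refine ⟨e2, ?_⟩
          have hqi : q i = 1 := by
            rcases Nat.eq_zero_or_pos i with rfl | hi
            · exact hq0
            · exact hq1 i hi (by omega)
          have hr := (hall i (by omega)).2.1
          rw [hqi, one_mul] at hr
          show ρ (i + 2) = horadam 1 (ρ 1) (i + 2)
          rw [horadam_rec]
          omega
      obtain ⟨e1, e2⟩ := key (l + 1) le_rfl
      exact ⟨1, Or.inl rfl, ρ 1, ha1, l + 1, by omega,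
        by rw [← hm']; exact e1, by rw [← hn]; exact e2⟩
    · -- q 0 = 2 : take ε = -1, a = ρ 1 + 1, j = l + 2
      have hb2 : horadam (-1) (ρ 1 + 1) 2 = ρ 1 := by
        rw [horadam_rec (-1) (ρ 1 + 1) 0]
        show ρ 1 + 1 + (-1) = ρ 1
        ring
      have hb3 : horadam (-1) (ρ 1 + 1) 3 = 2 * ρ 1 + 1 := by
        rw [horadam_rec (-1) (ρ 1 + 1) 1, hb2]
        show ρ 1 + (ρ 1 + 1) = 2 * ρ 1 + 1
        ring
      have key : ∀ k, k ≤ l →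
          ρ (k + 1) = horadam (-1) (ρ 1 + 1) (k + 2) ∧
            ρ (k + 2) = horadam (-1) (ρ 1 + 1) (k + 3) := by
        intro k hk
        induction k with
        | zero =>
          have hr2 : ρ 2 = 2 * ρ 1 + 1 := by
            have h21 := H0.2.1
            rw [hq0] at h21
            omega
          show ρ 1 = horadam (-1) (ρ 1 + 1) 2 ∧ ρ 2 = horadam (-1) (ρ 1 + 1) 3
          rw [hb2, hb3]
          exact ⟨rfl, hr2⟩
        | succ i ih =>
          obtain ⟨e1, e2⟩ := ih (by omega)
          refine ⟨e2, ?_⟩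
          have hqi : q (i + 1) = 1 := hq1 (i + 1) (by omega) (by omega)
          have hr0 := (hall (i + 1) (by omega)).2.1
          rw [hqi, one_mul] at hr0
          have hr : ρ (i + 3) = ρ (i + 2) + ρ (i + 1) := hr0
          have h4 : horadam (-1) (ρ 1 + 1) (i + 4) =
              horadam (-1) (ρ 1 + 1) (i + 3) + horadam (-1) (ρ 1 + 1) (i + 2) :=
            horadam_rec (-1) (ρ 1 + 1) (i + 2)
          show ρ (i + 3) = horadam (-1) (ρ 1 + 1) (i + 4)
          omega
      obtain ⟨e1, e2⟩ := key l le_rfl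
      exact ⟨-1, Or.inr rfl, ρ 1 + 1, by omega, l + 2, by omega,
        by rw [← hm']; exact e1, by rw [← hn]; exact e2⟩
end

section
/- Let m and n be coprime integers with 1 < m < n, and let (q_l, …, q_1, q_0) be the quotient sequence of (m, n). Then there exist an integer a ≥ 2 and an integer j ≥ 1 such that m = G_j and n = G_{j+1}, where G is the (1, a)-Horadam sequence, if and only if q_i = 1 for all 0 ≤ i ≤ l. -/
lemma horadam_pos_s13 (a : ℤ) (ha : 2 ≤ a) : ∀ t, 0 < horadam 1 a t := by
  intro t
  induction t using Nat.strong_induction_on with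
  | _ t ih =>
    match t with
    | 0 => norm_num [horadam]
    | 1 => show 0 < a; omega
    | t + 2 =>
      have h1 := ih (t + 1) (by omega)
      have h2 := ih t (by omega)
      show 0 < horadam 1 a (t + 1) + horadam 1 a t
      omega

lemma horadam_lt (a : ℤ) (ha : 2 ≤ a) : ∀ t, horadam 1 a t < horadam 1 a (t + 1) := by
  intro t
  match t with
  | 0 => show (1 : ℤ) < a; omega
  | t + 1 =>
    have := horadam_pos_s13 a ha t
    show horadam 1 a (t + 1) < horadam 1 a (t + 1) + horadam 1 a t
    omega

theorem horadam_one_subseq_iff_all_quotients_one (m n : ℤ) (hm : 1 < m) (hmn : m < n)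
    (hcop : IsCoprime m n) (l : ℕ) (q ρ : ℕ → ℤ) (hqs : IsQuotSeq m n l q ρ) :
    (∃ a : ℤ, 2 ≤ a ∧ ∃ j : ℕ, 1 ≤ j ∧
        m = horadam 1 a j ∧ n = horadam 1 a (j + 1)) ↔
      ∀ i : ℕ, i ≤ l → q i = 1 := by
  obtain ⟨hn, hm', h0, hrec⟩ := hqs
  constructor
  · rintro ⟨a, ha, j, hj, hmG, hnG⟩
    set H := horadam 1 a with hH
    -- step lemma
    have step : ∀ i ≤ l, ∀ s : ℕ, ρ (i + 1) = H (s + 1) → ρ (i + 2) = H (s + 2) →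
        q i = 1 ∧ ρ i = H s := by
      intro i hi s h1 h2
      obtain ⟨hq1, hrec', hpos, hlt⟩ := hrec i hi
      rw [h1, h2] at hrec'
      rw [h1] at hlt
      have hHrec : H (s + 2) = H (s + 1) + H s := rfl
      have hHlt : H s < H (s + 1) := horadam_lt a ha s
      have hHpos : 0 < H s := horadam_pos_s13 a ha s
      rw [hHrec] at hrec'
      constructor
      · by_contra hq
        have : 2 ≤ q i := by omega
        nlinarith
      · have : q i = 1 := by
          by_contra hq
          have : 2 ≤ q i := by omega
          nlinarith
        rw [this] at hrec'
        linarith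
    have claim : ∀ k, k ≤ l + 1 → ∃ s : ℕ, ρ (l + 1 - k) = H s ∧ ρ (l + 2 - k) = H (s + 1) := by
      intro k
      induction k with
      | zero => intro _; exact ⟨j, by simpa using hm' ▸ hmG, by simpa using hn ▸ hnG⟩
      | succ k ih =>
        intro hk
        obtain ⟨s, h1, h2⟩ := ih (by omega)
        set i := l - k with hi
        have e1 : l + 1 - k = i + 1 := by omega
        have e2 : l + 2 - k = i + 2 := by omega
        rw [e1] at h1; rw [e2] at h2
        have hil : i ≤ l := by omega
        obtain ⟨_, _, hpos, hlt⟩ := hrec i hil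
        have hs : s ≠ 0 := by
          rintro rfl
          have : H 0 = 1 := rfl
          omega
        obtain ⟨t, rfl⟩ := Nat.exists_eq_succ_of_ne_zero hs
        obtain ⟨_, hρi⟩ := step i hil t h1 h2
        have e3 : l + 1 - (k + 1) = i := by omega
        have e4 : l + 2 - (k + 1) = i + 1 := by omega
        exact ⟨t, by rw [e3]; exact hρi, by rw [e4]; exact h1⟩
    intro i hil
    obtain ⟨s, h1, h2⟩ := claim (l - i) (by omega)
    have e1 : l + 1 - (l - i) = i + 1 := by omega
    have e2 : l + 2 - (l - i) = i + 2 := by omega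
    rw [e1] at h1; rw [e2] at h2
    obtain ⟨_, _, hpos, hlt⟩ := hrec i hil
    have hs : s ≠ 0 := by
      rintro rfl
      have : H 0 = 1 := rfl
      omega
    obtain ⟨t, rfl⟩ := Nat.exists_eq_succ_of_ne_zero hs
    exact (step i hil t h1 h2).1
  · intro hq
    set a := ρ 1 with haa
    have h01 : ρ 0 < ρ 1 := (hrec 0 (by omega)).2.2.2
    have ha : 2 ≤ a := by omega
    have key : ∀ i, i ≤ l + 2 → ρ i = horadam 1 a i := by
      intro i
      induction i using Nat.strong_induction_on with
      | _ i ih =>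
        match i with
        | 0 => intro _; exact h0
        | 1 => intro _; rfl
        | t + 2 =>
          intro hi
          have htl : t ≤ l := by omega
          obtain ⟨_, hrec', _, _⟩ := hrec t htl
          have h1 := ih (t + 1) (by omega) (by omega)
          have h2 := ih t (by omega) (by omega)
          have : horadam 1 a (t + 2) = horadam 1 a (t + 1) + horadam 1 a t := rfl
          rw [this, ← h1, ← h2, hrec', hq t htl]
          ring
    refine ⟨a, ha, l + 1, by omega, ?_, ?_⟩
    · rw [← hm']; exact key (l + 1) (by omega)
    · rw [← hn]; exact key (l + 2) (by omega)
end

section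
/- Let p > q ≥ 2 be coprime integers and let r be an integer with 2 ≤ r ≤ p + q. Suppose that there exists an integer β with 2 ≤ β and βq < p such that r ≡ βq (mod p) or r ≡ -βq (mod p), and that r is congruent to 1, -1, p, or -p modulo q. Then (p, q, r) has one of the following forms: (1) r = p - kq for some integer k with 2 ≤ k and kq < p; (2) q = 3 and r = p + i where i ∈ {1, 2} and p ≡ i (mod 3); (3) (p, q, r) = (i(2j + 1) + j + (1+ε)/2, 2j + 1, (i+1)(2j + 1) + ε) for some ε ∈ {1, -1} and integers i ≥ 1, j ≥ 1. -/
set_option maxHeartbeats 1000000 in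
theorem primitive_middle_seifert_classification (p q r : ℤ) (hq : 2 ≤ q) (hpq : q < p)
    (hcop : IsCoprime p q) (hr2 : 2 ≤ r) (hrpq : r ≤ p + q)
    (hmod_p : ∃ β : ℤ, 2 ≤ β ∧ β * q < p ∧
      (r ≡ β * q [ZMOD p] ∨ r ≡ -(β * q) [ZMOD p]))
    (hmod_q : r ≡ 1 [ZMOD q] ∨ r ≡ -1 [ZMOD q] ∨ r ≡ p [ZMOD q] ∨ r ≡ -p [ZMOD q]) :
    (∃ k : ℤ, 2 ≤ k ∧ k * q < p ∧ r = p - k * q) ∨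
      (q = 3 ∧ ∃ i : ℤ, (i = 1 ∨ i = 2) ∧ r = p + i ∧ p ≡ i [ZMOD 3]) ∨
      (∃ ε : ℤ, (ε = 1 ∨ ε = -1) ∧ ∃ i j : ℤ, 1 ≤ i ∧ 1 ≤ j ∧
        p = i * (2 * j + 1) + j + (1 + ε) / 2 ∧ q = 2 * j + 1 ∧
        r = (i + 1) * (2 * j + 1) + ε) := by
  obtain ⟨β, hβ2, hβq, hcase⟩ := hmod_p
  have hq0 : (0:ℤ) < q := by linarith
  have hp0 : (0:ℤ) < p := by linarith
  have hqndvdp : ¬ q ∣ p := by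
    intro h
    have := Int.isUnit_iff.mp (hcop.isUnit_of_dvd' h dvd_rfl)
    omega
  have hβq2 : 2 * q ≤ β * q := by nlinarith
  rcases hcase with h | h
  · -- r ≡ βq (mod p): forces r = βq, contradiction with hmod_q
    exfalso
    have hd : p ∣ β * q - r := h.dvd
    have h0 : β * q - r = 0 := Int.eq_zero_of_abs_lt_dvd hd (by rw [abs_lt]; omega)
    have hrq : q ∣ r := ⟨β, by linarith [mul_comm β q]⟩
    rcases hmod_q with hm | hm | hm | hm
    · have h1 : q ∣ 1 - r := hm.dvd
      have h2 : q ∣ (1:ℤ) := by simpa using dvd_add h1 hrq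
      have := Int.le_of_dvd one_pos h2; omega
    · have h1 : q ∣ -1 - r := hm.dvd
      have h2 : q ∣ (-1:ℤ) := by simpa using dvd_add h1 hrq
      have := Int.le_of_dvd one_pos (dvd_neg.mp (by simpa using h2)); omega
    · have h1 : q ∣ p - r := hm.dvd
      exact hqndvdp (by simpa using dvd_add h1 hrq)
    · have h1 : q ∣ -p - r := hm.dvd
      have h2 : q ∣ -p := by simpa using dvd_add h1 hrq
      exact hqndvdp (dvd_neg.mp (by simpa using h2))
  · -- r ≡ -βq (mod p): p ∣ r + βq, so r + βq = p or 2p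
    have hd : p ∣ r + β * q := by
      have h1 : p ∣ -(β * q) - r := h.dvd
      rw [show -(β * q) - r = -(r + β * q) by ring] at h1
      exact dvd_neg.mp h1
    obtain ⟨c, hc⟩ := hd
    have hc1 : 1 ≤ c := by nlinarith
    have hc2 : c ≤ 2 := by nlinarith
    interval_cases c
    · -- r = p - βq
      exact Or.inl ⟨β, hβ2, hβq, by omega⟩
    · -- r = 2p - βq, r ∈ [p+1, p+q]
      have hr : r = 2 * p - β * q := by linarith
      have hrlow : p + 1 ≤ r := by omega
      have hqβ : q ∣ β * q := ⟨β, mul_comm β q⟩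
      rcases hmod_q with hm | hm | hm | hm
      · -- q ∣ 2p - 1 : case (3) with ε = 1
        have hd1 : q ∣ 2 * p - 1 := by
          have h1 : q ∣ 1 - r := hm.dvd
          have h2 := dvd_sub hqβ h1
          rw [show β * q - (1 - r) = 2 * p - 1 by omega] at h2
          exact h2
        have hqodd : ¬ (2:ℤ) ∣ q := fun h2 => by have := h2.trans hd1; omega
        obtain ⟨j, hj⟩ : ∃ j : ℤ, q = 2 * j + 1 := ⟨(q-1)/2, by omega⟩
        have hj1 : 1 ≤ j := by omega
        have hcop2 : IsCoprime q (2:ℤ) := ⟨1, -j, by linarith⟩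
        have hdvd2 : q ∣ 2 * (p - j - 1) := by
          have h2 := dvd_sub hd1 (dvd_refl q)
          rw [show 2 * p - 1 - q = 2 * (p - j - 1) by omega] at h2
          exact h2
        obtain ⟨i, hi⟩ := hcop2.dvd_of_dvd_mul_left hdvd2
        subst hj
        have hi1 : 1 ≤ i := by
          by_contra hcon
          push_neg at hcon
          have : (2 * j + 1) * i ≤ 0 :=
            mul_nonpos_iff.mpr (Or.inl ⟨by linarith, by linarith⟩)
          linarith
        have hkey : (2 * j + 1) * (i + 1) = p + j := by
          have : (2 * j + 1) * (i + 1) = (2 * j + 1) * i + (2 * j + 1) := by ring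
          linarith
        have hri : r = (i + 1) * (2 * j + 1) + 1 := by
          have h1 : (2 * j + 1) ∣ 1 - r := hm.dvd
          have h2 : (2 * j + 1) ∣ 1 - r + (2 * j + 1) * (i + 1) := dvd_add h1 ⟨i+1, rfl⟩
          have h3 : 1 - r + (2 * j + 1) * (i + 1) = 0 :=
            Int.eq_zero_of_abs_lt_dvd h2 (by rw [abs_lt]; constructor <;> linarith)
          linarith [mul_comm (i + 1) (2 * j + 1)]
        refine Or.inr (Or.inr ⟨1, Or.inl rfl, i, j, hi1, hj1, ?_, rfl, hri⟩)
        norm_num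
        linarith [mul_comm i (2 * j + 1)]
      · -- q ∣ 2p + 1 : case (3) with ε = -1
        have hd1 : q ∣ 2 * p + 1 := by
          have h1 : q ∣ -1 - r := hm.dvd
          have h2 := dvd_sub hqβ h1
          rw [show β * q - (-1 - r) = 2 * p + 1 by omega] at h2
          exact h2
        have hqodd : ¬ (2:ℤ) ∣ q := fun h2 => by have := h2.trans hd1; omega
        obtain ⟨j, hj⟩ : ∃ j : ℤ, q = 2 * j + 1 := ⟨(q-1)/2, by omega⟩
        have hj1 : 1 ≤ j := by omega
        have hcop2 : IsCoprime q (2:ℤ) := ⟨1, -j, by linarith⟩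
        have hdvd2 : q ∣ 2 * (p - j) := by
          have h2 := dvd_sub hd1 (dvd_refl q)
          rw [show 2 * p + 1 - q = 2 * (p - j) by omega] at h2
          exact h2
        obtain ⟨i, hi⟩ := hcop2.dvd_of_dvd_mul_left hdvd2
        subst hj
        have hi1 : 1 ≤ i := by
          by_contra hcon
          push_neg at hcon
          have : (2 * j + 1) * i ≤ 0 :=
            mul_nonpos_iff.mpr (Or.inl ⟨by linarith, by linarith⟩)
          linarith
        have hkey : (2 * j + 1) * (i + 1) = p + j + 1 := by
          have : (2 * j + 1) * (i + 1) = (2 * j + 1) * i + (2 * j + 1) := by ring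
          linarith
        have hri : r = (i + 1) * (2 * j + 1) + (-1) := by
          have h1 : (2 * j + 1) ∣ -1 - r := hm.dvd
          have h2 : (2 * j + 1) ∣ -1 - r + (2 * j + 1) * (i + 1) := dvd_add h1 ⟨i+1, rfl⟩
          have h3 : -1 - r + (2 * j + 1) * (i + 1) = 0 :=
            Int.eq_zero_of_abs_lt_dvd h2 (by rw [abs_lt]; constructor <;> linarith)
          linarith [mul_comm (i + 1) (2 * j + 1)]
        refine Or.inr (Or.inr ⟨-1, Or.inr rfl, i, j, hi1, hj1, ?_, rfl, hri⟩)
        norm_num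
        linarith [mul_comm i (2 * j + 1)]
      · -- r ≡ p (mod q) ⇒ q ∣ p, contradiction
        exfalso
        apply hqndvdp
        have h1 : q ∣ p - r := hm.dvd
        have h2 := dvd_sub hqβ h1
        rw [show β * q - (p - r) = p by omega] at h2
        exact h2
      · -- r ≡ -p (mod q) ⇒ q ∣ 3, q = 3, case (2)
        have h3p : q ∣ 3 * p := by
          have h1 : q ∣ -p - r := hm.dvd
          have h2 := dvd_sub hqβ h1
          rw [show β * q - (-p - r) = 3 * p by omega] at h2
          exact h2
        have hq3 : q ∣ (3:ℤ) := (hcop.symm).dvd_of_dvd_mul_right h3p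
        have hq3' : q = 3 := by
          have := Int.le_of_dvd (by norm_num) hq3
          interval_cases q
          · exfalso; omega
          · rfl
        subst hq3'
        have hne3 : r - p ≠ 3 := by
          intro h3
          exact hqndvdp ⟨β + 1, by linarith⟩
        refine Or.inr (Or.inl ⟨rfl, r - p, by omega, by omega, ?_⟩)
        rw [Int.modEq_iff_dvd]
        exact ⟨-β, by linarith⟩
end

section
/- Let p > q ≥ 2 be coprime integers and let r be an integer with 2 ≤ r ≤ p + q. If r ≡ 1 or -1 (mod p) and r ≡ 1 or -1 (mod q), then (p, q, r) = (3, 2, 5), or (p, q, r) = (q + 1, q, 2q + 1), or q is odd and there exist an integer k ≥ 1 and ε ∈ {1, -1} such that p = kq + 2ε and r = kq + ε. -/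
private lemma aux_eq {p m : ℤ} (hp : 0 < p) (h : p ∣ m) (h1 : 0 < m) (h2 : m < 2 * p) :
    m = p := by
  obtain ⟨c, rfl⟩ := h
  have hc1 : 0 < c := by
    by_contra hc
    push_neg at hc
    nlinarith
  have hc2 : c < 2 := by
    by_contra hc
    push_neg at hc
    nlinarith
  have : c = 1 := by omega
  subst this; ring

private lemma aux_eq2 {p m : ℤ} (hp : 0 < p) (h : p ∣ m) (h1 : 0 < m) (h2 : m ≤ 2 * p) :
    m = p ∨ m = 2 * p := by
  obtain ⟨c, rfl⟩ := h
  have hc1 : 0 < c := by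
    by_contra hc
    push_neg at hc
    nlinarith
  have hc2 : c ≤ 2 := by
    by_contra hc
    push_neg at hc
    nlinarith
  interval_cases c
  · left; ring
  · right; ring

private lemma pos_factor {q m : ℤ} (hq : 0 < q) (h : 0 < q * m) : 1 ≤ m := by
  by_contra hc
  push_neg at hc
  nlinarith

theorem case_pm_one_mod_p_and_q (p q r : ℤ) (hq : 2 ≤ q) (hpq : q < p)
    (hcop : IsCoprime p q) (hr2 : 2 ≤ r) (hrpq : r ≤ p + q)
    (hmod_p : r ≡ 1 [ZMOD p] ∨ r ≡ -1 [ZMOD p])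
    (hmod_q : r ≡ 1 [ZMOD q] ∨ r ≡ -1 [ZMOD q]) :
    (p = 3 ∧ q = 2 ∧ r = 5) ∨
      (p = q + 1 ∧ r = 2 * q + 1) ∨
      (Odd q ∧ ∃ k : ℤ, 1 ≤ k ∧ ∃ ε : ℤ, (ε = 1 ∨ ε = -1) ∧
        p = k * q + 2 * ε ∧ r = k * q + ε) := by
  have hp : 0 < p := by omega
  have hq0 : 0 < q := by omega
  have hqndvdp : ¬ q ∣ p := by
    intro hd
    have := Int.isUnit_iff.mp (hcop.isUnit_of_dvd' hd dvd_rfl)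
    omega
  have hodd : ∀ m : ℤ, (p = m * q + 2 ∨ p = m * q - 2) → Odd q := by
    intro m hm
    rw [← Int.not_even_iff_odd]
    intro he
    have h2q : (2:ℤ) ∣ q := he.two_dvd
    have h2p : (2:ℤ) ∣ p := by
      obtain ⟨s, hs⟩ := h2q.mul_left m
      rcases hm with hm | hm <;> omega
    have := Int.isUnit_iff.mp (hcop.isUnit_of_dvd' h2p h2q)
    omega
  rcases hmod_p with h1 | h1
  · -- p ∣ r - 1, so r = p + 1
    have hd : p ∣ r - 1 := dvd_sub_comm.mp (Int.ModEq.dvd h1)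
    have hr : r - 1 = p := aux_eq hp hd (by omega) (by omega)
    rcases hmod_q with h2 | h2
    · -- q ∣ r - 1 = p : contradiction
      have : q ∣ p := hr ▸ dvd_sub_comm.mp (Int.ModEq.dvd h2)
      exact absurd this hqndvdp
    · -- q ∣ r + 1 = p + 2
      have hd2 : q ∣ p + 2 := by
        have : q ∣ r + 1 := by
          have := Int.ModEq.dvd h2
          simpa [sub_neg_eq_add, add_comm] using (dvd_sub_comm.mp this)
        have hrp : r + 1 = p + 2 := by omega
        rwa [hrp] at this
      obtain ⟨m, hm⟩ := hd2
      have hm' : m * q = q * m := mul_comm m q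
      have hm1 : 1 ≤ m := pos_factor hq0 (by omega)
      right; right
      refine ⟨hodd m (Or.inr (by omega)), m, hm1, -1, Or.inr rfl, by omega, by omega⟩
  · -- p ∣ r + 1
    have hd : p ∣ r + 1 := by
      have := Int.ModEq.dvd h1
      simpa [sub_neg_eq_add, add_comm] using (dvd_sub_comm.mp this)
    rcases aux_eq2 hp hd (by omega) (by omega) with hr | hr
    · -- r = p - 1
      rcases hmod_q with h2 | h2
      · -- q ∣ r - 1 = p - 2
        have hd2 : q ∣ p - 2 := by
          have : q ∣ r - 1 := dvd_sub_comm.mp (Int.ModEq.dvd h2)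
          have hrp : r - 1 = p - 2 := by omega
          rwa [hrp] at this
        obtain ⟨m, hm⟩ := hd2
        have hm' : m * q = q * m := mul_comm m q
        have hm1 : 1 ≤ m := pos_factor hq0 (by omega)
        right; right
        refine ⟨hodd m (Or.inl (by omega)), m, hm1, 1, Or.inl rfl, by omega, by omega⟩
      · -- q ∣ r + 1 = p : contradiction
        have : q ∣ p := by
          have h3 : q ∣ r + 1 := by
            have := Int.ModEq.dvd h2
            simpa [sub_neg_eq_add, add_comm] using (dvd_sub_comm.mp this)
          have hrp : r + 1 = p := by omega
          rwa [hrp] at h3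
        exact absurd this hqndvdp
    · -- r = 2p - 1, so p = q + 1
      right; left
      constructor <;> omega
end
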